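/- arXiv:1108.3619 — 3 statements merged into one kernel-verified Lean document; each statement's English description precedes it below -/
import Mathlib

section
/- There exists an infinite word over a 2-letter alphabet all of whose finite nonempty factors have exponent strictly less than 3; that is, there exists a cube-free infinite binary word. -/
def tm : ℕ → Bool
  | 0 => false
  | (n+1) => xor ((n+1) % 2 == 1) (tm ((n+1)/2))
decreasing_by exact Nat.div_lt_self (Nat.succ_pos n) one_lt_two

lemma tm_def (n : ℕ) (h : 0 < n) : tm n = xor (n % 2 == 1) (tm (n/2)) := by
  cases n with
  | zero => omega
  | succ k => rw [tm]

lemma tm_two (n : ℕ) : tm (2*n) = tm n := by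
  rcases Nat.eq_zero_or_pos n with h | h
  · simp [h]
  · rw [tm_def (2*n) (by omega)]
    have h1 : (2*n) % 2 = 0 := by omega
    have h2 : (2*n) / 2 = n := by omega
    simp [h1, h2]

lemma tm_odd (n : ℕ) : tm (2*n+1) = ! tm n := by
  rw [tm_def (2*n+1) (by omega)]
  have h1 : (2*n+1) % 2 = 1 := by omega
  have h2 : (2*n+1) / 2 = n := by omega
  simp [h1, h2]

lemma tm_ne (n : ℕ) : tm (2*n) ≠ tm (2*n+1) := by
  rw [tm_two, tm_odd]
  cases tm n <;> simp

lemma no_run3 (n : ℕ) : ¬ (tm n = tm (n+1) ∧ tm (n+1) = tm (n+2)) := by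
  rcases Nat.even_or_odd n with ⟨m, hm⟩ | ⟨m, hm⟩
  · intro ⟨h1, _⟩
    apply tm_ne m
    have e1 : 2*m = n := by omega
    have e2 : 2*m+1 = n+1 := by omega
    rw [e2, e1]; exact h1
  · intro ⟨_, h2⟩
    apply tm_ne (m+1)
    have e1 : 2*(m+1) = n+1 := by omega
    have e2 : 2*(m+1)+1 = n+2 := by omega
    rw [e2, e1]; exact h2

lemma tm_main : ∀ p, 1 ≤ p → ∀ i, ¬ (∀ k, k < 2*p → tm (i+k) = tm (i+k+p)) := by
  intro p
  induction p using Nat.strong_induction_on with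
  | _ p IH =>
    intro hp i H
    rcases Nat.lt_or_ge p 2 with h2 | h2
    · -- p = 1 : run of 3
      have hp1 : p = 1 := by omega
      subst hp1
      apply no_run3 i
      constructor
      · have := H 0 (by omega); simpa using this
      · have := H 1 (by omega)
        have e : i + 1 + 1 = i + 2 := by omega
        simpa [e] using this
    · rcases Nat.even_or_odd p with ⟨q, hq⟩ | ⟨q, hq⟩
      · -- p = 2q, q ≥ 1 : halve
        have hq' : p = 2*q := by omega
        have hq1 : 1 ≤ q := by omega
        apply IH q (by omega) hq1 ((i+1)/2)
        intro k hk
        have key : ∀ m, i ≤ 2*m → 2*m < i + 2*p → tm (2*m) = tm (2*m + p) := by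
          intro m h1 h3
          have := H (2*m - i) (by omega)
          have e1 : i + (2*m - i) = 2*m := by omega
          rw [e1] at this; exact this
        have hm : i ≤ 2*((i+1)/2 + k) := by omega
        have hm2 : 2*((i+1)/2 + k) < i + 2*p := by omega
        have := key _ hm hm2
        rw [tm_two] at this
        have e : 2*((i+1)/2 + k) + p = 2*((i+1)/2 + k + q) := by omega
        rw [e, tm_two] at this
        exact this
      · -- p = 2q+1, q ≥ 1 : get a run of 3
        have hq' : p = 2*q+1 := by omega
        have hq1 : 1 ≤ q := by omega
        set m0 := (i+1)/2 with hm0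
        -- (*): for m with i ≤ 2m < i+2p : tm m = ! tm (m+q)
        have star : ∀ m, i ≤ 2*m → 2*m < i + 2*p → tm m = ! tm (m+q) := by
          intro m h1 h3
          have := H (2*m - i) (by omega)
          have e1 : i + (2*m - i) = 2*m := by omega
          rw [e1] at this
          have e2 : 2*m + p = 2*(m+q)+1 := by omega
          rw [e2, tm_odd, tm_two] at this
          exact this
        -- (**): for m with i ≤ 2m+1 < i+2p : ! tm m = tm (m+q+1)
        have dstar : ∀ m, i ≤ 2*m+1 → 2*m+1 < i + 2*p → (! tm m) = tm (m+q+1) := by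
          intro m h1 h3
          have := H (2*m+1 - i) (by omega)
          have e1 : i + (2*m+1 - i) = 2*m+1 := by omega
          rw [e1] at this
          have e2 : 2*m+1 + p = 2*(m+q+1) := by omega
          rw [e2, tm_two, tm_odd] at this
          exact this
        -- combine at m0 and m0+1
        have comb : ∀ m, i ≤ 2*m → 2*m+1 < i + 2*p → tm (m+q) = tm (m+q+1) := by
          intro m h1 h3
          have hs := star m h1 (by omega)
          have hd := dstar m (by omega) h3
          rw [← hd, hs, Bool.not_not]
        have c1 := comb m0 (by omega) (by omega)
        have c2 := comb (m0+1) (by omega) (by omega)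
        apply no_run3 (m0+q)
        constructor
        · exact c1
        · have e : m0+1+q = m0+q+1 := by omega
          rw [e] at c2
          exact c2

def HasPeriod {A : Type*} (w : List A) (p : ℕ) : Prop :=
  1 ≤ p ∧ ∀ i, i + p < w.length → w[i]? = w[i + p]?

noncomputable def period {A : Type*} (w : List A) : ℕ :=
  sInf {p | HasPeriod w p}

noncomputable def exponent {A : Type*} (w : List A) : ℚ :=
  (w.length : ℚ) / (period w : ℚ)

/-- `w` is a finite factor of the infinite word `f`. -/
def FactorOf {A : Type*} (w : List A) (f : ℕ → A) : Prop :=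
  ∃ i, w = (List.range w.length).map (fun k => f (i + k))

theorem stmt1 :
    ∃ f : ℕ → Fin 2, ∀ w : List (Fin 2), w ≠ [] → FactorOf w f → exponent w < 3 := by
  refine ⟨fun n => if tm n then 1 else 0, ?_⟩
  intro w hw ⟨i, hfac⟩
  have hlenpos : 0 < w.length := List.length_pos_iff.mpr hw
  -- the set of periods is nonempty
  have hmem : w.length ∈ {p | HasPeriod w p} := by
    refine ⟨hlenpos, fun j hj => ?_⟩
    omega
  have hper : HasPeriod w (period w) := Nat.sInf_mem ⟨_, hmem⟩
  obtain ⟨hp1, hpdef⟩ := hper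
  set p := period w with hp
  -- get? of the factor
  have hget : ∀ k, k < w.length → w[k]? = some (if tm (i+k) then 1 else 0) := by
    intro k hk
    conv_lhs => rw [hfac]
    simp [hk]
  -- length < 3p
  have hlen : w.length < 3 * p := by
    by_contra hge
    push_neg at hge
    apply tm_main p hp1 i
    intro k hk
    have h1 := hpdef k (by omega)
    rw [hget k (by omega), hget (k+p) (by omega)] at h1
    have h2 : (if tm (i+k) then (1:Fin 2) else 0) = (if tm (i+(k+p)) then 1 else 0) := by
      exact Option.some_injective _ h1
    have e : i + (k+p) = i + k + p := by omega
    rw [e] at h2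
    by_contra hne
    clear hget hpdef hfac hmem h1
    cases htm1 : tm (i+k) <;> cases htm2 : tm (i+k+p) <;>
      rw [htm1, htm2] at h2 hne <;>
      first
        | exact hne rfl
        | exact absurd h2 (by norm_num)
  -- conclude
  unfold exponent
  rw [div_lt_iff₀ (by exact_mod_cast hp1)]
  push_cast
  rw [← hp]
  exact_mod_cast by linarith [hlen]
end

section
/- Every word over a 3-letter alphabet of length at least 39 contains a factor of exponent at least 7/4. (In particular, there are only finitely many ternary words all of whose nonempty factors have exponent strictly less than 7/4.) -/
/-!
A word with period `p` and length `p + ⌈3p/4⌉` has exponent at least `7/4`. So if `w` had no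
factor of exponent at least `7/4`, no suffix of its prefix of length 39 would start with such a
word. Growing ternary words right to left, one prepended letter at a time, and pruning those
that start with such a word, the search dies out before length 39; the kernel checks this by
`decide`, on words coded as base-3 numerals.
-/

section Period

variable {A : Type*} {w : List A} {p : ℕ}

theorem HasPeriod.period_le (h : HasPeriod w p) : period w ≤ p :=
  Nat.sInf_le h

theorem HasPeriod.le_exponent {r : ℚ} (h : HasPeriod w p) (hr : r * p ≤ w.length) :
    r ≤ exponent w := by
  have hmin : HasPeriod w (period w) := Nat.sInf_mem (s := {q | HasPeriod w q}) ⟨p, h⟩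
  have hp : (0 : ℚ) < p := by exact_mod_cast h.1
  calc r ≤ (w.length : ℚ) / p := (le_div_iff₀ hp).2 hr
    _ ≤ exponent w := div_le_div_of_nonneg_left (by positivity) (by exact_mod_cast hmin.1)
        (by exact_mod_cast h.period_le)

theorem hasPeriod_take_add {m : ℕ} (hp : 1 ≤ p) (h : w.take m = (w.drop p).take m) :
    HasPeriod (w.take (p + m)) p := by
  refine ⟨hp, fun i hi => ?_⟩
  rw [List.length_take] at hi
  have him : i < m := by omega
  calc (w.take (p + m))[i]? = (w.take m)[i]? := by
        rw [List.getElem?_take, List.getElem?_take, if_pos (by omega), if_pos him]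
    _ = ((w.drop p).take m)[i]? := by rw [h]
    _ = (w.take (p + m))[i + p]? := by
        rw [List.getElem?_take, List.getElem?_take, if_pos him, if_pos (by omega),
          List.getElem?_drop, add_comm]

end Period

section Code

variable {b : ℕ}

-- Base-`b` numeral of `w` with the first letter as least significant digit, so that prefixes
-- are residues modulo powers of `b`, and prepending a letter `a` maps `x` to `b * x + a`.
def code (w : List (Fin b)) : ℕ :=
  Nat.ofDigits b (w.map Fin.val)

theorem code_cons (a : Fin b) (w : List (Fin b)) : code (a :: w) = a + b * code w :=
  Nat.ofDigits_cons

theorem take_eq_take_drop_of_code_mod_eq (hb : 1 < b) {w : List (Fin b)} {p m : ℕ}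
    (hpm : p + m ≤ w.length) (h : code w % b ^ m = code w / b ^ p % b ^ m) :
    w.take m = (w.drop p).take m := by
  have hdigits : ∀ d ∈ w.map Fin.val, d < b := by simp
  rw [code, Nat.ofDigits_div_pow_eq_ofDigits_drop p (by omega) _ hdigits,
    Nat.ofDigits_mod_pow_eq_ofDigits_take m (by omega) _ hdigits,
    Nat.ofDigits_mod_pow_eq_ofDigits_take m (by omega) _
      fun d hd => hdigits d (List.mem_of_mem_drop hd)] at h
  have hmap := Nat.ofDigits_inj_of_len_eq hb (by simp; omega)
    (fun d hd => hdigits d (List.mem_of_mem_take hd))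
    (fun d hd => hdigits d (List.mem_of_mem_drop (List.mem_of_mem_take hd))) h
  rw [← List.map_drop, ← List.map_take, ← List.map_take] at hmap
  exact List.map_injective_iff.2 Fin.val_injective hmap

end Code

-- `⌈3p/4⌉`, the least `m` with `p + m ≥ 7p/4`.
def sevenFourthsExcess (p : ℕ) : ℕ := (3 * p + 3) / 4

-- Here `x` and `n` are the code and the length of a ternary word.
def hasPowerPrefix (x n p : ℕ) : Bool :=
  decide (p + sevenFourthsExcess p ≤ n) &&
    decide (x % 3 ^ sevenFourthsExcess p = x / 3 ^ p % 3 ^ sevenFourthsExcess p)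

def powerPrefixFree (x n : ℕ) : Bool :=
  (List.range' 1 n).all fun p => !hasPowerPrefix x n p

-- Some `k` letters can be prepended to the word with code `x` and length `n`, one at a time,
-- keeping every intermediate word `powerPrefixFree`.
def extendable (x n : ℕ) : ℕ → Bool
  | 0 => true
  | k + 1 => [0, 1, 2].any fun a =>
      powerPrefixFree (3 * x + a) (n + 1) && extendable (3 * x + a) (n + 1) k

theorem hasPeriod_take_of_hasPowerPrefix {w : List (Fin 3)} {p : ℕ} (hp : 1 ≤ p)
    (h : hasPowerPrefix (code w) w.length p) :
    p + sevenFourthsExcess p ≤ w.length ∧ HasPeriod (w.take (p + sevenFourthsExcess p)) p := by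
  simp only [hasPowerPrefix, Bool.and_eq_true, decide_eq_true_eq] at h
  obtain ⟨hlen, hcode⟩ := h
  exact ⟨hlen,
    hasPeriod_take_add hp (take_eq_take_drop_of_code_mod_eq (by norm_num) hlen hcode)⟩

theorem powerPrefixFree_code_of_forall_prefix {w : List (Fin 3)}
    (hfree : ∀ v, v ≠ [] → v <+: w → exponent v < 7 / 4) :
    powerPrefixFree (code w) w.length := by
  by_contra hpow
  rw [Bool.not_eq_true] at hpow
  obtain ⟨p, ⟨hp, -⟩, hpow⟩ := by simpa [powerPrefixFree, List.mem_range'_1] using hpow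
  obtain ⟨hlen, hper⟩ := hasPeriod_take_of_hasPowerPrefix hp hpow
  set v := w.take (p + sevenFourthsExcess p)
  have hv_len : v.length = p + sevenFourthsExcess p := List.length_take_of_le hlen
  have hv_power : 7 / 4 ≤ exponent v := hper.le_exponent <| by
    have : 7 * p ≤ 4 * (p + sevenFourthsExcess p) := by unfold sevenFourthsExcess; omega
    have : (7 * p : ℚ) ≤ 4 * ↑(p + sevenFourthsExcess p) := by exact_mod_cast this
    rw [hv_len]
    linarith
  exact (hfree v (List.ne_nil_of_length_pos (by omega)) (List.take_prefix _ _)).not_ge hv_power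

theorem extendable_of_powerPrefixFree_drop (u v : List (Fin 3))
    (h : ∀ j < u.length, powerPrefixFree (code (u.drop j ++ v)) (u.drop j ++ v).length) :
    extendable (code v) v.length u.length := by
  induction u using List.reverseRecOn generalizing v with
  | nil => rfl
  | append_singleton u a ih =>
    have hfree : powerPrefixFree (code (a :: v)) (a :: v).length := by
      simpa using h u.length (by simp)
    have hext : extendable (code (a :: v)) (a :: v).length u.length := by
      refine ih (a :: v) fun j hj => ?_
      simpa [List.drop_append_of_le_length hj.le] using h j (by simp; omega)
    rw [List.length_append, List.length_singleton, extendable, List.any_eq_true]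
    refine ⟨a, by fin_cases a <;> simp, ?_⟩
    rw [code_cons, add_comm (a : ℕ)] at hfree hext
    rw [Bool.and_eq_true]
    exact ⟨hfree, hext⟩

theorem extendable_zero_zero_39 : extendable 0 0 39 = false := by decide

theorem stmt3 (w : List (Fin 3)) (h : 39 ≤ w.length) :
    ∃ v : List (Fin 3), v ≠ [] ∧ v <:+: w ∧ 7/4 ≤ exponent v := by
  by_contra! hfree
  have hsearch := extendable_of_powerPrefixFree_drop (w.take 39) [] fun j _ =>
    powerPrefixFree_code_of_forall_prefix fun v hv hpre => by
      rw [List.append_nil] at hpre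
      exact hfree v hv <|
        hpre.isInfix.trans ((List.drop_suffix j _).isInfix.trans (List.take_prefix 39 w).isInfix)
  rw [List.length_take_of_le h] at hsearch
  simp [code, extendable_zero_zero_39] at hsearch
end

section
/- Every word w of length 7 with w[i]=w[i+5] for i=0,1 and with all letters among 4 symbols contains a nonempty factor of exponent strictly greater than 7/5, unless its period is smaller than 5. -/
lemma period_pos {A : Type*} (w : List A) (p : ℕ) (hne : HasPeriod w p) :
    1 ≤ period w := by
  have hmem := Nat.sInf_mem (⟨p, hne⟩ : {q | HasPeriod w q}.Nonempty)
  exact hmem.1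

lemma expo2 {A : Type*} (x : A) : 7/5 < exponent [x, x] := by
  have h1 : HasPeriod [x, x] 1 := by
    refine ⟨le_refl 1, fun i hi => ?_⟩
    simp at hi
    have : i = 0 := by omega
    subst this; rfl
  have hle : period [x, x] ≤ 1 := Nat.sInf_le h1
  have hge : 1 ≤ period [x, x] := period_pos _ _ h1
  have hp : period [x, x] = 1 := le_antisymm hle hge
  simp [exponent, hp]
  norm_num

lemma expo3 {A : Type*} (x y : A) : 7/5 < exponent [x, y, x] := by
  have h2 : HasPeriod [x, y, x] 2 := by
    refine ⟨by norm_num, fun i hi => ?_⟩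
    simp at hi
    have : i = 0 := by omega
    subst this; rfl
  have hle : period [x, y, x] ≤ 2 := Nat.sInf_le h2
  have hge : 1 ≤ period [x, y, x] := period_pos _ _ h2
  have hlen : exponent [x, y, x] = 3 / (period [x, y, x] : ℚ) := by
    simp [exponent]
  rw [hlen]
  interval_cases h : period [x, y, x] <;> norm_num

theorem stmt4 (w : List (Fin 4)) (h7 : w.length = 7) (hp : period w = 5) :
    ∃ v : List (Fin 4), v ≠ [] ∧ v <:+: w ∧ v ≠ w ∧ 7/5 < exponent v := by
  have hne : {q | HasPeriod w q}.Nonempty := by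
    refine ⟨7, le_of_eq rfl |>.trans (by norm_num), fun i hi => ?_⟩
    rw [h7] at hi; omega
  have h5 : HasPeriod w 5 := hp ▸ Nat.sInf_mem hne
  rcases w with _|⟨a,_|⟨b,_|⟨c,_|⟨d,_|⟨e,_|⟨f,_|⟨g,rest⟩⟩⟩⟩⟩⟩⟩ <;> simp at h7
  subst h7
  have hf : a = f := by
    have := h5.2 0 (by simp)
    simpa using this
  have hg : b = g := by
    have := h5.2 1 (by simp)
    simpa using this
  subst hf; subst hg
  have key : a = b ∨ a = c ∨ a = d ∨ a = e ∨ b = c ∨ b = d ∨ b = e ∨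
      c = d ∨ c = e ∨ d = e := by
    have : ∀ a b c d e : Fin 4, a = b ∨ a = c ∨ a = d ∨ a = e ∨ b = c ∨ b = d ∨ b = e ∨
        c = d ∨ c = e ∨ d = e := by decide
    exact this a b c d e
  have nlen : ∀ (u v : List (Fin 4)), u.length ≠ v.length → u ≠ v := by
    intro u v h hc; exact h (by rw [hc])
  rcases key with h|h|h|h|h|h|h|h|h|h
  · subst h
    exact ⟨[a, a], by simp, ⟨[], [c, d, e, a, a], rfl⟩, nlen _ _ (by simp), expo2 a⟩
  · subst h
    exact ⟨[a, b, a], by simp, ⟨[], [d, e, a, b], rfl⟩, nlen _ _ (by simp), expo3 a b⟩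
  · subst h
    exact ⟨[a, e, a], by simp, ⟨[a, b, c], [b], rfl⟩, nlen _ _ (by simp), expo3 a e⟩
  · subst h
    exact ⟨[a, a], by simp, ⟨[a, b, c, d], [b], rfl⟩, nlen _ _ (by simp), expo2 a⟩
  · subst h
    exact ⟨[b, b], by simp, ⟨[a], [d, e, a, b], rfl⟩, nlen _ _ (by simp), expo2 b⟩
  · subst h
    exact ⟨[b, c, b], by simp, ⟨[a], [e, a, b], rfl⟩, nlen _ _ (by simp), expo3 b c⟩
  · subst h
    exact ⟨[b, a, b], by simp, ⟨[a, b, c, d], [], rfl⟩, nlen _ _ (by simp), expo3 b a⟩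
  · subst h
    exact ⟨[c, c], by simp, ⟨[a, b], [e, a, b], rfl⟩, nlen _ _ (by simp), expo2 c⟩
  · subst h
    exact ⟨[c, d, c], by simp, ⟨[a, b], [a, b], rfl⟩, nlen _ _ (by simp), expo3 c d⟩
  · subst h
    exact ⟨[d, d], by simp, ⟨[a, b, c], [a, b], rfl⟩, nlen _ _ (by simp), expo2 d⟩
end
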